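/- Under Assumption (A2): for every z0 ∈ [z̲1*, z̄1*] with ψ1(z0) = 1 and every nonzero nonnegative row vector u with u·C1(z0, G1(z0)) = u, the vector u is entrywise positive and, for every integer k ≥ 0, the row vector u·A¹_{*,1}(z0)·N1(z0)·R1(z0)^k is entrywise positive, where N1(z0) = (I − A_{*,0}(z0) − A_{*,1}(z0)·G1(z0))^{−1} (this inverse exists) and R1(z0) = A_{*,1}(z0)·N1(z0). Symmetrically, for every w0 ∈ [z̲2*, z̄2*] with ψ2(w0) = 1 and every nonzero nonnegative row vector u with u·C2(G2(w0), w0) = u, the vectors u and u·A²_{1,*}(w0)·N2(w0)·R2(w0)^k (k ≥ 0) are entrywise positive, where N2(w0) = (I − A_{0,*}(w0) − A_{1,*}(w0)·G2(w0))^{−1} and R2(w0) = A_{1,*}(w0)·N2(w0). -/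

import Mathlib

namespace QBD

/-- The index set `H = {-1, 0, 1}`. -/
def Hs : Finset ℤ := {-1, 0, 1}

/-- The index set `H⁺ = {0, 1}`. -/
def Hps : Finset ℤ := {0, 1}

/-- A nonnegative matrix with unit row sums. -/
def IsStochastic {n : ℕ} (M : Matrix (Fin n) (Fin n) ℝ) : Prop :=
  (∀ i j, 0 ≤ M i j) ∧ ∀ i, ∑ j, M i j = 1

/-- `μ` is an eigenvalue of the complex matrix `M`. -/
def IsEigC {n : ℕ} (M : Matrix (Fin n) (Fin n) ℂ) (μ : ℂ) : Prop :=
  ∃ v : Fin n → ℂ, v ≠ 0 ∧ M.mulVec v = μ • v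

/-- Spectral radius of a complex matrix. -/
noncomputable def spr {n : ℕ} (M : Matrix (Fin n) (Fin n) ℂ) : ℝ :=
  sSup {r : ℝ | ∃ μ : ℂ, IsEigC M μ ∧ r = ‖μ‖}

/-- Spectral radius of a real matrix. -/
noncomputable def sprR {n : ℕ} (M : Matrix (Fin n) (Fin n) ℝ) : ℝ :=
  spr (M.map Complex.ofReal)

open Classical in
/-- `n`-step transition probabilities of a Markov kernel on a countable state space. -/
noncomputable def stepN {S : Type*} (P : S → S → ℝ) : ℕ → S → S → ℝ
  | 0, s, t => if s = t then 1 else 0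
  | n + 1, s, t => ∑' u, stepN P n s u * P u t

/-- Irreducibility of a Markov kernel. -/
def ChainIrreducible {S : Type*} (P : S → S → ℝ) : Prop :=
  ∀ s t : S, ∃ n : ℕ, 1 ≤ n ∧ 0 < stepN P n s t

/-- Aperiodicity of a Markov kernel: for every state, the gcd of return times is one. -/
def ChainAperiodic {S : Type*} (P : S → S → ℝ) : Prop :=
  ∀ s : S, ∀ d : ℕ, (∀ n : ℕ, 1 ≤ n → 0 < stepN P n s s → d ∣ n) → d = 1

/-- Transition kernel of the 2D-QBD process on `ℤ₊² × S0`. -/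
def qbdKernel (s0 : ℕ) (A A1 A2 A0 : ℤ → ℤ → Matrix (Fin s0) (Fin s0) ℝ) :
    (ℕ × ℕ × Fin s0) → (ℕ × ℕ × Fin s0) → ℝ := fun x y =>
  if 1 ≤ x.1 ∧ 1 ≤ x.2.1 then
    A ((y.1 : ℤ) - (x.1 : ℤ)) ((y.2.1 : ℤ) - (x.2.1 : ℤ)) x.2.2 y.2.2
  else if 1 ≤ x.1 then
    A1 ((y.1 : ℤ) - (x.1 : ℤ)) ((y.2.1 : ℤ) - (x.2.1 : ℤ)) x.2.2 y.2.2
  else if 1 ≤ x.2.1 then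
    A2 ((y.1 : ℤ) - (x.1 : ℤ)) ((y.2.1 : ℤ) - (x.2.1 : ℤ)) x.2.2 y.2.2
  else
    A0 ((y.1 : ℤ) - (x.1 : ℤ)) ((y.2.1 : ℤ) - (x.2.1 : ℤ)) x.2.2 y.2.2

/-- Kernel of the chain on `ℤ² × S0` governed everywhere by `{A_{k,l}}`. -/
def fullKernel (s0 : ℕ) (A : ℤ → ℤ → Matrix (Fin s0) (Fin s0) ℝ) :
    (ℤ × ℤ × Fin s0) → (ℤ × ℤ × Fin s0) → ℝ := fun x y =>
  A (y.1 - x.1) (y.2.1 - x.2.1) x.2.2 y.2.2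

/-- Kernel of the chain on `ℤ × ℤ₊ × S0` with boundary `x2 = 0` governed by `{A¹_{k,l}}`. -/
def half1Kernel (s0 : ℕ) (A A1 : ℤ → ℤ → Matrix (Fin s0) (Fin s0) ℝ) :
    (ℤ × ℕ × Fin s0) → (ℤ × ℕ × Fin s0) → ℝ := fun x y =>
  if x.2.1 = 0 then A1 (y.1 - x.1) ((y.2.1 : ℤ) - (x.2.1 : ℤ)) x.2.2 y.2.2
  else A (y.1 - x.1) ((y.2.1 : ℤ) - (x.2.1 : ℤ)) x.2.2 y.2.2

/-- Kernel of the chain on `ℤ₊ × ℤ × S0` with boundary `x1 = 0` governed by `{A²_{k,l}}`. -/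
def half2Kernel (s0 : ℕ) (A A2 : ℤ → ℤ → Matrix (Fin s0) (Fin s0) ℝ) :
    (ℕ × ℤ × Fin s0) → (ℕ × ℤ × Fin s0) → ℝ := fun x y =>
  if x.1 = 0 then A2 ((y.1 : ℤ) - (x.1 : ℤ)) (y.2.1 - x.2.1) x.2.2 y.2.2
  else A ((y.1 : ℤ) - (x.1 : ℤ)) (y.2.1 - x.2.1) x.2.2 y.2.2

/-- `C(z,w) = Σ_{i,j∈H} A_{i,j} z^i w^j` (real arguments). -/
noncomputable def CmatR (s0 : ℕ) (A : ℤ → ℤ → Matrix (Fin s0) (Fin s0) ℝ) (z w : ℝ) :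
    Matrix (Fin s0) (Fin s0) ℝ :=
  ∑ i ∈ Hs, ∑ j ∈ Hs, (z ^ i * w ^ j) • A i j

/-- `χ(z,w) = spr(C(z,w))`. -/
noncomputable def chi (s0 : ℕ) (A : ℤ → ℤ → Matrix (Fin s0) (Fin s0) ℝ) (z w : ℝ) : ℝ :=
  sprR (CmatR s0 A z w)

/-- `Γ̄ = {(s1,s2) : χ(e^{s1}, e^{s2}) ≤ 1}`. -/
def GammaBar (s0 : ℕ) (A : ℤ → ℤ → Matrix (Fin s0) (Fin s0) ℝ) : Set (ℝ × ℝ) :=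
  {p | chi s0 A (Real.exp p.1) (Real.exp p.2) ≤ 1}

/-- `s̲1*`. -/
noncomputable def sLow1 (s0 : ℕ) (A : ℤ → ℤ → Matrix (Fin s0) (Fin s0) ℝ) : ℝ :=
  sInf (Prod.fst '' GammaBar s0 A)

/-- `s̄1*`. -/
noncomputable def sUp1 (s0 : ℕ) (A : ℤ → ℤ → Matrix (Fin s0) (Fin s0) ℝ) : ℝ :=
  sSup (Prod.fst '' GammaBar s0 A)

/-- `s̲2*`. -/
noncomputable def sLow2 (s0 : ℕ) (A : ℤ → ℤ → Matrix (Fin s0) (Fin s0) ℝ) : ℝ :=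
  sInf (Prod.snd '' GammaBar s0 A)

/-- `s̄2*`. -/
noncomputable def sUp2 (s0 : ℕ) (A : ℤ → ℤ → Matrix (Fin s0) (Fin s0) ℝ) : ℝ :=
  sSup (Prod.snd '' GammaBar s0 A)

/-- `z̲1* = e^{s̲1*}`. -/
noncomputable def zLow1 (s0 : ℕ) (A : ℤ → ℤ → Matrix (Fin s0) (Fin s0) ℝ) : ℝ :=
  Real.exp (sLow1 s0 A)

/-- `z̄1* = e^{s̄1*}`. -/
noncomputable def zUp1 (s0 : ℕ) (A : ℤ → ℤ → Matrix (Fin s0) (Fin s0) ℝ) : ℝ :=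
  Real.exp (sUp1 s0 A)

/-- `z̲2* = e^{s̲2*}`. -/
noncomputable def zLow2 (s0 : ℕ) (A : ℤ → ℤ → Matrix (Fin s0) (Fin s0) ℝ) : ℝ :=
  Real.exp (sLow2 s0 A)

/-- `z̄2* = e^{s̄2*}`. -/
noncomputable def zUp2 (s0 : ℕ) (A : ℤ → ℤ → Matrix (Fin s0) (Fin s0) ℝ) : ℝ :=
  Real.exp (sUp2 s0 A)

/-- `ζ̲2(r)`, the smallest positive solution `w` of `χ(r,w) = 1`. -/
noncomputable def zetaLow2 (s0 : ℕ) (A : ℤ → ℤ → Matrix (Fin s0) (Fin s0) ℝ) (r : ℝ) : ℝ :=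
  sInf {w : ℝ | 0 < w ∧ chi s0 A r w = 1}

/-- `ζ̄2(r)`, the largest positive solution `w` of `χ(r,w) = 1`. -/
noncomputable def zetaUp2 (s0 : ℕ) (A : ℤ → ℤ → Matrix (Fin s0) (Fin s0) ℝ) (r : ℝ) : ℝ :=
  sSup {w : ℝ | 0 < w ∧ chi s0 A r w = 1}

/-- `ζ̲1(w)`, the smallest positive solution `z` of `χ(z,w) = 1`. -/
noncomputable def zetaLow1 (s0 : ℕ) (A : ℤ → ℤ → Matrix (Fin s0) (Fin s0) ℝ) (w : ℝ) : ℝ :=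
  sInf {z : ℝ | 0 < z ∧ chi s0 A z w = 1}

/-- `ζ̄1(w)`, the largest positive solution `z` of `χ(z,w) = 1`. -/
noncomputable def zetaUp1 (s0 : ℕ) (A : ℤ → ℤ → Matrix (Fin s0) (Fin s0) ℝ) (w : ℝ) : ℝ :=
  sSup {z : ℝ | 0 < z ∧ chi s0 A z w = 1}

/-- `A_{*,i}(z) = Σ_{j∈H} A_{j,i} z^j`. -/
noncomputable def AstarR (s0 : ℕ) (A : ℤ → ℤ → Matrix (Fin s0) (Fin s0) ℝ) (z : ℝ) (i : ℤ) :
    Matrix (Fin s0) (Fin s0) ℝ := ∑ j ∈ Hs, (z ^ j) • A j i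

/-- `A_{i,*}(w) = Σ_{j∈H} A_{i,j} w^j`. -/
noncomputable def ArowR (s0 : ℕ) (A : ℤ → ℤ → Matrix (Fin s0) (Fin s0) ℝ) (w : ℝ) (i : ℤ) :
    Matrix (Fin s0) (Fin s0) ℝ := ∑ j ∈ Hs, (w ^ j) • A i j

/-- `A¹_{*,i}(z) = Σ_{j∈H} A¹_{j,i} z^j`. -/
noncomputable def A1starR (s0 : ℕ) (A1 : ℤ → ℤ → Matrix (Fin s0) (Fin s0) ℝ) (z : ℝ) (i : ℤ) :
    Matrix (Fin s0) (Fin s0) ℝ := ∑ j ∈ Hs, (z ^ j) • A1 j i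

/-- `A²_{i,*}(w) = Σ_{j∈H} A²_{i,j} w^j`. -/
noncomputable def A2rowR (s0 : ℕ) (A2 : ℤ → ℤ → Matrix (Fin s0) (Fin s0) ℝ) (w : ℝ) (i : ℤ) :
    Matrix (Fin s0) (Fin s0) ℝ := ∑ j ∈ Hs, (w ^ j) • A2 i j

/-- `X` is the minimal nonnegative solution of
`A_{*,-1}(z) + A_{*,0}(z) X + A_{*,1}(z) X² = X`. -/
def IsMinSolG1 (s0 : ℕ) (A : ℤ → ℤ → Matrix (Fin s0) (Fin s0) ℝ) (z : ℝ)
    (X : Matrix (Fin s0) (Fin s0) ℝ) : Prop :=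
  (∀ i j, 0 ≤ X i j) ∧
  (AstarR s0 A z (-1) + AstarR s0 A z 0 * X + AstarR s0 A z 1 * (X * X) = X) ∧
  ∀ Y : Matrix (Fin s0) (Fin s0) ℝ, (∀ i j, 0 ≤ Y i j) →
    AstarR s0 A z (-1) + AstarR s0 A z 0 * Y + AstarR s0 A z 1 * (Y * Y) = Y →
    ∀ i j, X i j ≤ Y i j

/-- `X` is the minimal nonnegative solution of
`A_{-1,*}(w) + A_{0,*}(w) X + A_{1,*}(w) X² = X`. -/
def IsMinSolG2 (s0 : ℕ) (A : ℤ → ℤ → Matrix (Fin s0) (Fin s0) ℝ) (w : ℝ)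
    (X : Matrix (Fin s0) (Fin s0) ℝ) : Prop :=
  (∀ i j, 0 ≤ X i j) ∧
  (ArowR s0 A w (-1) + ArowR s0 A w 0 * X + ArowR s0 A w 1 * (X * X) = X) ∧
  ∀ Y : Matrix (Fin s0) (Fin s0) ℝ, (∀ i j, 0 ≤ Y i j) →
    ArowR s0 A w (-1) + ArowR s0 A w 0 * Y + ArowR s0 A w 1 * (Y * Y) = Y →
    ∀ i j, X i j ≤ Y i j

/-- `C1(z,X) = A¹_{*,0}(z) + A¹_{*,1}(z) X`. -/
noncomputable def C1matR (s0 : ℕ) (A1 : ℤ → ℤ → Matrix (Fin s0) (Fin s0) ℝ) (z : ℝ)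
    (X : Matrix (Fin s0) (Fin s0) ℝ) : Matrix (Fin s0) (Fin s0) ℝ :=
  A1starR s0 A1 z 0 + A1starR s0 A1 z 1 * X

/-- `C2(X,w) = A²_{0,*}(w) + A²_{1,*}(w) X`. -/
noncomputable def C2matR (s0 : ℕ) (A2 : ℤ → ℤ → Matrix (Fin s0) (Fin s0) ℝ)
    (X : Matrix (Fin s0) (Fin s0) ℝ) (w : ℝ) : Matrix (Fin s0) (Fin s0) ℝ :=
  A2rowR s0 A2 w 0 + A2rowR s0 A2 w 1 * X

/-- `ψ1(z) = spr(C1(z, G1(z)))`. -/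
noncomputable def psi1 (s0 : ℕ) (A1 : ℤ → ℤ → Matrix (Fin s0) (Fin s0) ℝ)
    (G1 : ℝ → Matrix (Fin s0) (Fin s0) ℝ) (z : ℝ) : ℝ :=
  sprR (C1matR s0 A1 z (G1 z))

/-- `ψ2(w) = spr(C2(G2(w), w))`. -/
noncomputable def psi2 (s0 : ℕ) (A2 : ℤ → ℤ → Matrix (Fin s0) (Fin s0) ℝ)
    (G2 : ℝ → Matrix (Fin s0) (Fin s0) ℝ) (w : ℝ) : ℝ :=
  sprR (C2matR s0 A2 (G2 w) w)

/-- `θ1 = max{s ∈ [s̲1*, s̄1*] : ψ1(e^s) ≤ 1}`. -/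
noncomputable def theta1 (s0 : ℕ) (A A1 : ℤ → ℤ → Matrix (Fin s0) (Fin s0) ℝ)
    (G1 : ℝ → Matrix (Fin s0) (Fin s0) ℝ) : ℝ :=
  sSup {s : ℝ | sLow1 s0 A ≤ s ∧ s ≤ sUp1 s0 A ∧ psi1 s0 A1 G1 (Real.exp s) ≤ 1}

/-- `η2 = max{s ∈ [s̲2*, s̄2*] : ψ2(e^s) ≤ 1}`. -/
noncomputable def eta2 (s0 : ℕ) (A A2 : ℤ → ℤ → Matrix (Fin s0) (Fin s0) ℝ)
    (G2 : ℝ → Matrix (Fin s0) (Fin s0) ℝ) : ℝ :=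
  sSup {s : ℝ | sLow2 s0 A ≤ s ∧ s ≤ sUp2 s0 A ∧ psi2 s0 A2 G2 (Real.exp s) ≤ 1}

/-- `θ2 = log ζ̲2(e^{θ1})`. -/
noncomputable def theta2 (s0 : ℕ) (A A1 : ℤ → ℤ → Matrix (Fin s0) (Fin s0) ℝ)
    (G1 : ℝ → Matrix (Fin s0) (Fin s0) ℝ) : ℝ :=
  Real.log (zetaLow2 s0 A (Real.exp (theta1 s0 A A1 G1)))

/-- `θ̄2 = log ζ̄2(e^{θ1})`. -/
noncomputable def theta2bar (s0 : ℕ) (A A1 : ℤ → ℤ → Matrix (Fin s0) (Fin s0) ℝ)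
    (G1 : ℝ → Matrix (Fin s0) (Fin s0) ℝ) : ℝ :=
  Real.log (zetaUp2 s0 A (Real.exp (theta1 s0 A A1 G1)))

/-- `η1 = log ζ̲1(e^{η2})`. -/
noncomputable def eta1 (s0 : ℕ) (A A2 : ℤ → ℤ → Matrix (Fin s0) (Fin s0) ℝ)
    (G2 : ℝ → Matrix (Fin s0) (Fin s0) ℝ) : ℝ :=
  Real.log (zetaLow1 s0 A (Real.exp (eta2 s0 A A2 G2)))

/-- `η̄1 = log ζ̄1(e^{η2})`. -/
noncomputable def eta1bar (s0 : ℕ) (A A2 : ℤ → ℤ → Matrix (Fin s0) (Fin s0) ℝ)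
    (G2 : ℝ → Matrix (Fin s0) (Fin s0) ℝ) : ℝ :=
  Real.log (zetaUp1 s0 A (Real.exp (eta2 s0 A A2 G2)))

/-- Product of two (possibly infinite) nonnegative kernels. -/
noncomputable def imul {T : Type*} (M N : T → T → ℝ) : T → T → ℝ :=
  fun x y => ∑' u, M x u * N u y

open Classical in
/-- `n`-th power of an infinite matrix. -/
noncomputable def ipow {T : Type*} (M : T → T → ℝ) : ℕ → T → T → ℝ
  | 0, x, y => if x = y then 1 else 0
  | n + 1, x, y => imul (ipow M n) M x y

/-- Irreducibility of an infinite nonnegative matrix. -/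
def InfIrreducible {T : Type*} (M : T → T → ℝ) : Prop :=
  ∀ x y, ∃ n : ℕ, 1 ≤ n ∧ 0 < ipow M n x y

/-- The block-tridiagonal matrix `A¹ₖ` on `ℤ₊ × S0`. -/
def blkA1 (s0 : ℕ) (A A1 : ℤ → ℤ → Matrix (Fin s0) (Fin s0) ℝ) (k : ℤ) :
    (ℕ × Fin s0) → (ℕ × Fin s0) → ℝ := fun x y =>
  if x.1 = 0 then A1 k (y.1 : ℤ) x.2 y.2
  else A k ((y.1 : ℤ) - (x.1 : ℤ)) x.2 y.2

/-- The block-tridiagonal matrix `A²ₖ` on `ℤ₊ × S0`. -/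
def blkA2 (s0 : ℕ) (A A2 : ℤ → ℤ → Matrix (Fin s0) (Fin s0) ℝ) (k : ℤ) :
    (ℕ × Fin s0) → (ℕ × Fin s0) → ℝ := fun x y =>
  if x.1 = 0 then A2 (y.1 : ℤ) k x.2 y.2
  else A ((y.1 : ℤ) - (x.1 : ℤ)) k x.2 y.2

/-- `R` is the minimal nonnegative solution of `R = R² B_{-1} + R B_0 + B_1`
for an infinite block kernel `B`. -/
def IsMinSolRinf (s0 : ℕ) (B : ℤ → (ℕ × Fin s0) → (ℕ × Fin s0) → ℝ)
    (R : (ℕ × Fin s0) → (ℕ × Fin s0) → ℝ) : Prop :=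
  (∀ x y, 0 ≤ R x y) ∧
  (∀ x y, imul (imul R R) (B (-1)) x y + imul R (B 0) x y + B 1 x y = R x y) ∧
  ∀ R' : (ℕ × Fin s0) → (ℕ × Fin s0) → ℝ, (∀ x y, 0 ≤ R' x y) →
    (∀ x y, imul (imul R' R') (B (-1)) x y + imul R' (B 0) x y + B 1 x y = R' x y) →
    ∀ x y, R x y ≤ R' x y

open Classical in
/-- All eigenvalues of the real matrix `M` (as a complex matrix) are distinct. -/
def EigsDistinct {n : ℕ} (M : Matrix (Fin n) (Fin n) ℝ) : Prop :=
  ((Matrix.charpoly (M.map Complex.ofReal)).roots).toFinset.card = n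

end QBD

/-!
Write `P d = A_{*,d}(z)` and `U = P 0 + P 1 G`. Since the level moves by at most one per step,
paths of the chain split at first passages and last visits: a descent by one level that stays above
the target until the end yields a positive entry of `G` (from `G = P₋₁ + P₀G + P₁G²`), an excursion
returning to its starting level yields a positive entry of some power `Uʳ`, and a climb by `k`
levels yields a positive entry of `N (P₁N)ᵏ` for any `N` dominating all the `Uʳ`. Irreducibility
on `ℤ²` lets every phase descend, so every row of some `Uʳ P₋₁` is nonzero; together with
`∑_{n<m} Uⁿ P₋₁ ≤ G` this makes `∑ Uⁿ` converge, to `N = (1 - U)⁻¹`. Irreducibility of the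
half-plane chain makes `C1 = A¹_{*,0} + A¹_{*,1} G` irreducible, which forces its nonnegative
invariant vector `u` to be positive, and a path from the boundary to level `k + 1`, cut at its last
boundary visit, gives the positivity of `u A¹_{*,1} N Rᵏ`. The second half-plane is the first one
with the coordinates swapped.
-/

theorem Summable.isUnit_one_sub {α : Type*} [Ring α] [TopologicalSpace α] [IsTopologicalRing α]
    [T2Space α] {x : α} (h : Summable (x ^ ·)) : IsUnit (1 - x) :=
  ⟨⟨1 - x, ∑' n, x ^ n, h.one_sub_mul_tsum_pow, h.tsum_pow_mul_one_sub⟩, rfl⟩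

namespace QBD

open Matrix Finset

section NonnegMatrices

variable {l m n : Type*}

def EntrywiseNonneg (M : Matrix m n ℝ) : Prop := ∀ i j, 0 ≤ M i j

namespace EntrywiseNonneg

variable {M M' : Matrix m n ℝ} {X : Matrix l m ℝ} {Y : Matrix m n ℝ}

theorem add (hM : EntrywiseNonneg M) (hM' : EntrywiseNonneg M') : EntrywiseNonneg (M + M') :=
  fun i j => add_nonneg (hM i j) (hM' i j)

theorem mul [Fintype m] (hX : EntrywiseNonneg X) (hY : EntrywiseNonneg Y) :
    EntrywiseNonneg (X * Y) :=
  fun i j => Finset.sum_nonneg fun c _ => mul_nonneg (hX i c) (hY c j)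

theorem one [DecidableEq m] : EntrywiseNonneg (1 : Matrix m m ℝ) := fun i j => by
  rw [one_apply]; split_ifs <;> norm_num

theorem pow [Fintype m] [DecidableEq m] {M : Matrix m m ℝ} (hM : EntrywiseNonneg M) (k : ℕ) :
    EntrywiseNonneg (M ^ k) := by
  induction k with
  | zero => simpa using one
  | succ k ih => simpa only [pow_succ] using ih.mul hM

theorem apply_mul_apply_le [Fintype m] (hX : EntrywiseNonneg X) (hY : EntrywiseNonneg Y)
    (i : l) (c : m) (j : n) : X i c * Y c j ≤ (X * Y) i j :=
  Finset.single_le_sum (f := fun d => X i d * Y d j) (fun d _ => mul_nonneg (hX i d) (hY d j))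
    (mem_univ c)

theorem mul_apply_pos [Fintype m] (hX : EntrywiseNonneg X) (hY : EntrywiseNonneg Y) {i : l}
    {j : n} (c : m) (hic : 0 < X i c) (hcj : 0 < Y c j) : 0 < (X * Y) i j :=
  (mul_pos hic hcj).trans_le (hX.apply_mul_apply_le hY i c j)

theorem vecMul_pos [Fintype m] {u : m → ℝ} (hu : ∀ i, 0 ≤ u i) (hY : EntrywiseNonneg Y) {j : n}
    (c : m) (hc : 0 < u c) (hcj : 0 < Y c j) : 0 < vecMul u Y j :=
  Finset.sum_pos' (fun d _ => mul_nonneg (hu d) (hY d j)) ⟨c, mem_univ c, mul_pos hc hcj⟩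

theorem pos_of_vecMul_eq_self [Fintype m] [DecidableEq m] {C : Matrix m m ℝ}
    (hC : EntrywiseNonneg C) (hirr : ∀ k i, ∃ r, 0 < (C ^ r) k i) {u : m → ℝ} (hu0 : u ≠ 0)
    (hu : ∀ i, 0 ≤ u i) (hfix : vecMul u C = u) (i : m) : 0 < u i := by
  have hfix_pow : ∀ r, vecMul u (C ^ r) = u := fun r => by
    induction r with
    | zero => rw [pow_zero, vecMul_one]
    | succ r ih => rw [pow_succ, ← vecMul_vecMul, ih, hfix]
  obtain ⟨k, hk⟩ := Function.ne_iff.mp hu0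
  obtain ⟨r, hr⟩ := hirr k i
  rw [← hfix_pow r]
  exact vecMul_pos hu (hC.pow r) k ((hu k).lt_of_ne' hk) hr

end EntrywiseNonneg

end NonnegMatrices

section Neumann

variable {ι : Type*} [Fintype ι] [DecidableEq ι] {U V C : Matrix ι ι ℝ}

theorem summable_pow_of_sum_pow_mul_le (hU : EntrywiseNonneg U) (hV : EntrywiseNonneg V)
    (hbound : ∀ m k j, ∑ n ∈ range m, (U ^ n * V) k j ≤ C k j)
    (hreach : ∀ l, ∃ r j, 0 < (U ^ r * V) l j) : Summable (U ^ ·) := by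
  refine Pi.summable.2 fun k => Pi.summable.2 fun l => ?_
  obtain ⟨r, j, hrj⟩ := hreach l
  refine summable_of_sum_range_le (c := C k j / (U ^ r * V) l j)
    (fun n => hU.pow n k l) fun m => ?_
  rw [le_div_iff₀ hrj, sum_mul]
  calc ∑ n ∈ range m, (U ^ n) k l * (U ^ r * V) l j
      ≤ ∑ n ∈ range m, (U ^ (r + n) * V) k j := sum_le_sum fun n _ => by
        rw [add_comm, pow_add, mul_assoc]
        exact (hU.pow n).apply_mul_apply_le ((hU.pow r).mul hV) k l j
    _ ≤ ∑ n ∈ range (r + m), (U ^ n * V) k j := by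
        rw [sum_range_add]
        exact le_add_of_nonneg_left (sum_nonneg fun n _ => (hU.pow n).mul hV k j)
    _ ≤ C k j := hbound _ k j

theorem EntrywiseNonneg.of_pow_apply_le {N : Matrix ι ι ℝ} (hN : ∀ r k l, (U ^ r) k l ≤ N k l) :
    EntrywiseNonneg N :=
  fun k l => (EntrywiseNonneg.one k l).trans (by simpa using hN 0 k l)

theorem inv_one_sub_eq_tsum_pow (h : Summable (U ^ ·)) : (1 - U)⁻¹ = ∑' n, U ^ n :=
  inv_eq_right_inv h.one_sub_mul_tsum_pow

theorem pow_apply_le_tsum_pow (hU : EntrywiseNonneg U) (h : Summable (U ^ ·)) (r : ℕ) (k l : ι) :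
    (U ^ r) k l ≤ (∑' n, U ^ n) k l := by
  have hk := Pi.summable.1 h k
  have e : (∑' n, U ^ n) k l = ∑' n, (U ^ n) k l :=
    (congrFun (tsum_apply h) l).trans (tsum_apply hk)
  rw [e]
  exact (Pi.summable.1 hk l).le_tsum r fun n _ => hU.pow n k l

end Neumann

section LevelSequences

variable {f : ℕ → ℤ} {a b : ℕ} {H : ℤ}

theorem exists_first_hit (hab : a ≤ b) (hstep : ∀ t, a ≤ t → t < b → f t - 1 ≤ f (t + 1))
    (ha : H < f a) (hb : f b ≤ H) :
    ∃ τ, a < τ ∧ τ ≤ b ∧ f τ = H ∧ ∀ t, a ≤ t → t < τ → H < f t := by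
  classical
  have hex : ∃ n, f (a + n) ≤ H := ⟨b - a, by rwa [Nat.add_sub_cancel' hab]⟩
  have hmin : ∀ t, a ≤ t → t < a + Nat.find hex → H < f t := fun t h₁ h₂ => by
    have := Nat.find_min hex (m := t - a) (by omega)
    rwa [Nat.add_sub_cancel' h₁, not_le] at this
  have hpos : 0 < Nat.find hex := Nat.pos_of_ne_zero fun h => by
    have := Nat.find_spec hex; rw [h, add_zero] at this; omega
  have hle : a + Nat.find hex ≤ b := by
    have := Nat.find_min' hex (m := b - a) (by rwa [Nat.add_sub_cancel' hab]); omega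
  refine ⟨a + Nat.find hex, by omega, hle, le_antisymm (Nat.find_spec hex) ?_, hmin⟩
  have h₁ := hmin (a + Nat.find hex - 1) (by omega) (by omega)
  have h₂ := hstep (a + Nat.find hex - 1) (by omega) (by omega)
  rw [Nat.sub_add_cancel (by omega)] at h₂
  omega

theorem exists_last_visit (hab : a ≤ b) (ha : f a = H) (hb : f b ≠ H) :
    ∃ τ, a ≤ τ ∧ τ < b ∧ f τ = H ∧ ∀ t, τ < t → t ≤ b → f t ≠ H := by
  classical
  let visit : ℕ → Prop := fun t => a ≤ t ∧ f t = H
  have hvisit : visit (Nat.findGreatest visit b) := Nat.findGreatest_spec hab ⟨le_rfl, ha⟩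
  refine ⟨Nat.findGreatest visit b, hvisit.1, ?_, hvisit.2, fun t h₁ h₂ ht => ?_⟩
  · refine lt_of_le_of_ne (Nat.findGreatest_le b) fun h => hb ?_
    rw [← h]; exact hvisit.2
  · exact Nat.findGreatest_is_greatest h₁ h₂ ⟨by have := hvisit.1; omega, ht⟩

end LevelSequences

section Paths

variable {ι : Type*}

-- `p t` is (level, phase); the other coordinate of the chain is summed out in `AstarR`.
def IsPath (K : ℤ → ℤ → Matrix ι ι ℝ) (p : ℕ → ℤ × ι) (a b : ℕ) : Prop :=
  ∀ t, a ≤ t → t < b → 0 < K (p t).1 ((p (t + 1)).1 - (p t).1) (p t).2 (p (t + 1)).2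

def SkipFree (K : ℤ → ℤ → Matrix ι ι ℝ) : Prop := ∀ h d, d ∉ Hs → K h d = 0

def boundaryFamily (Q P : ℤ → Matrix ι ι ℝ) (h : ℤ) : ℤ → Matrix ι ι ℝ := if h = 0 then Q else P

variable {K : ℤ → ℤ → Matrix ι ι ℝ} {p : ℕ → ℤ × ι} {a b : ℕ}

namespace IsPath

theorem mono (hp : IsPath K p a b) {a' b' : ℕ} (ha : a ≤ a') (hb : b' ≤ b) :
    IsPath K p a' b' :=
  fun t h₁ h₂ => hp t (ha.trans h₁) (h₂.trans_le hb)

theorem pos_of_jump (hp : IsPath K p a b) {t : ℕ} (h₁ : a ≤ t) (h₂ : t < b) {d : ℤ}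
    (hd : (p (t + 1)).1 - (p t).1 = d) : 0 < K (p t).1 d (p t).2 (p (t + 1)).2 :=
  hd ▸ hp t h₁ h₂

theorem level_succ_bounds (hK : SkipFree K) (hp : IsPath K p a b) {t : ℕ} (h₁ : a ≤ t) (h₂ : t < b) :
    (p t).1 - 1 ≤ (p (t + 1)).1 ∧ (p (t + 1)).1 ≤ (p t).1 + 1 := by
  have hmem : (p (t + 1)).1 - (p t).1 ∈ Hs := by
    by_contra h
    have := hp t h₁ h₂
    rw [hK _ _ h] at this
    exact lt_irrefl _ this
  simp only [Hs, mem_insert, mem_singleton] at hmem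
  omega

theorem const_of_level (hp : IsPath K p a b) {P : ℤ → Matrix ι ι ℝ}
    (hKP : ∀ t, a ≤ t → t < b → K (p t).1 = P) : IsPath (fun _ => P) p a b :=
  fun t h₁ h₂ => hKP t h₁ h₂ ▸ hp t h₁ h₂

end IsPath

end Paths

section Descent

variable {ι : Type*} [Fintype ι] {P Q : ℤ → Matrix ι ι ℝ} {G : Matrix ι ι ℝ}
  {K : ℤ → ℤ → Matrix ι ι ℝ} {p : ℕ → ℤ × ι} {a b : ℕ} {H : ℤ}

def IsNonnegSolution (P : ℤ → Matrix ι ι ℝ) (G : Matrix ι ι ℝ) : Prop :=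
  EntrywiseNonneg G ∧ P (-1) + P 0 * G + P 1 * (G * G) = G

-- `U = A_{*,0} + A_{*,1} G` for `P = AstarR s0 A z`; `C1matR s0 A1 z G` is
-- definitionally `returnMat (AstarR s0 A1 z) G`.
def returnMat (P : ℤ → Matrix ι ι ℝ) (G : Matrix ι ι ℝ) : Matrix ι ι ℝ := P 0 + P 1 * G

theorem returnMat_nonneg (hP : ∀ d, EntrywiseNonneg (P d)) (hG : EntrywiseNonneg G) :
    EntrywiseNonneg (returnMat P G) :=
  (hP 0).add ((hP 1).mul hG)

theorem returnMat_apply_pos (hP : ∀ d, EntrywiseNonneg (P d)) (hG : EntrywiseNonneg G)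
    {k l : ι} (h : 0 < P 0 k l ∨ 0 < (P 1 * G) k l) : 0 < returnMat P G k l := by
  have h₀ := hP 0 k l
  have h₁ := (hP 1).mul hG k l
  rw [returnMat, Matrix.add_apply]
  rcases h with h | h <;> linarith

namespace IsNonnegSolution

theorem apply_pos (hP : ∀ d, EntrywiseNonneg (P d)) (hG : IsNonnegSolution P G) {k l : ι}
    (h : 0 < P (-1) k l ∨ 0 < (P 0 * G) k l ∨ 0 < (P 1 * (G * G)) k l) : 0 < G k l := by
  have e := congrFun (congrFun hG.2 k) l
  simp only [Matrix.add_apply] at e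
  have hm := hP (-1) k l
  have h₀ := (hP 0).mul hG.1 k l
  have h₁ := (hP 1).mul (hG.1.mul hG.1) k l
  rcases h with h | h | h <;> linarith

theorem sum_pow_mul_add_pow_mul [DecidableEq ι] (hG : IsNonnegSolution P G) (m : ℕ) :
    ∑ n ∈ range m, returnMat P G ^ n * P (-1) + returnMat P G ^ m * G = G := by
  induction m with
  | zero => simp
  | succ m ih =>
    have hU : returnMat P G * G = G - P (-1) := by
      rw [eq_sub_iff_add_eq', returnMat, add_mul, mul_assoc, ← add_assoc, hG.2]
    rw [sum_range_succ, pow_succ, mul_assoc, hU, mul_sub]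
    convert ih using 1
    abel

theorem sum_pow_mul_apply_le [DecidableEq ι] (hP : ∀ d, EntrywiseNonneg (P d))
    (hG : IsNonnegSolution P G) (m : ℕ) (k l : ι) : ∑ n ∈ range m, (returnMat P G ^ n * P (-1)) k l ≤ G k l := by
  have e := congrFun (congrFun (hG.sum_pow_mul_add_pow_mul m) k) l
  have h := ((returnMat_nonneg hP hG.1).pow m).mul hG.1 k l
  rw [Matrix.add_apply, Matrix.sum_apply] at e
  linarith

theorem pos_of_descent (hP : ∀ d, EntrywiseNonneg (P d)) (hPs : SkipFree fun _ => P)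
    (hG : IsNonnegSolution P G) (hp : IsPath (fun _ => P) p a b) (hab : a < b)
    (hge : ∀ t, a ≤ t → t < b → H ≤ (p t).1) (ha : (p a).1 = H) (hb : (p b).1 = H - 1) :
    0 < G (p a).2 (p b).2 := by
  obtain ⟨n, hn⟩ : ∃ n, b - a = n := ⟨_, rfl⟩
  induction n using Nat.strong_induction_on generalizing a b H with
  | _ n ih =>
  have hjump := hp.level_succ_bounds hPs le_rfl hab
  rcases (by omega : (p (a + 1)).1 = H - 1 ∨ (p (a + 1)).1 = H ∨ (p (a + 1)).1 = H + 1)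
    with hdown | hlevel | hup
  · obtain rfl : b = a + 1 := by
      by_contra hne
      have := hge (a + 1) (by omega) (by omega)
      omega
    exact hG.apply_pos hP (Or.inl (hp.pos_of_jump le_rfl hab (by omega)))
  · have hlt : a + 1 < b := lt_of_le_of_ne hab (by rintro rfl; omega)
    have hrest := ih _ (by omega) (hp.mono (by omega) le_rfl) hlt
      (fun t h₁ h₂ => hge t (by omega) h₂) hlevel hb rfl
    exact hG.apply_pos hP <| Or.inr <| Or.inl <|
      (hP 0).mul_apply_pos hG.1 _ (hp.pos_of_jump le_rfl hab (by omega)) hrest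
  · obtain ⟨τ, hτa, hτb, hτ, habove⟩ := exists_first_hit (f := fun t => (p t).1) (H := H)
      (by omega : a + 1 ≤ b) (fun t h₁ h₂ => (hp.level_succ_bounds hPs (by omega) h₂).1)
      (by omega) (by omega)
    have hτb' : τ < b := lt_of_le_of_ne hτb (by rintro rfl; omega)
    have hexcursion := ih _ (by omega) (hp.mono (by omega) hτb) hτa
      (fun t h₁ h₂ => by have := habove t h₁ h₂; omega) hup (by omega) rfl
    have hrest := ih _ (by omega) (hp.mono (by omega) le_rfl) hτb'
      (fun t h₁ h₂ => hge t (by omega) h₂) hτ hb rfl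
    exact hG.apply_pos hP <| Or.inr <| Or.inr <|
      (hP 1).mul_apply_pos (hG.1.mul hG.1) _ (hp.pos_of_jump le_rfl hab (by omega))
        (hG.1.mul_apply_pos hG.1 _ hexcursion hrest)

theorem exists_returnMat_pow_pos [DecidableEq ι] (hP : ∀ d, EntrywiseNonneg (P d))
    (hQ : ∀ d, EntrywiseNonneg (Q d)) (hK : SkipFree K) (hKQ : K H = Q)
    (hKP : ∀ h, H < h → K h = P) (hG : IsNonnegSolution P G) (hp : IsPath K p a b)
    (hab : a ≤ b) (hge : ∀ t, a ≤ t → t ≤ b → H ≤ (p t).1) (ha : (p a).1 = H)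
    (hb : (p b).1 = H) : ∃ r, 0 < (returnMat Q G ^ r) (p a).2 (p b).2 := by
  have hPs : SkipFree fun _ => P := fun _ d hd => hKP (H + 1) (by omega) ▸ hK _ d hd
  have hU := returnMat_nonneg hQ hG.1
  obtain ⟨n, hn⟩ : ∃ n, b - a = n := ⟨_, rfl⟩
  induction n using Nat.strong_induction_on generalizing a with
  | _ n ih =>
  rcases hab.eq_or_lt with rfl | hab
  · exact ⟨0, by simp⟩
  have hjump := hp.level_succ_bounds hK le_rfl hab
  have hstep : ∀ {d}, (p (a + 1)).1 - (p a).1 = d → 0 < Q d (p a).2 (p (a + 1)).2 :=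
    fun hd => by simpa only [ha, hKQ] using hp.pos_of_jump le_rfl hab hd
  have hge' := hge (a + 1) (by omega) (by omega)
  rcases (by omega : (p (a + 1)).1 = H ∨ (p (a + 1)).1 = H + 1) with hlevel | hup
  · obtain ⟨r, hr⟩ := ih _ (by omega) (hp.mono (by omega) le_rfl) (by omega)
      (fun t h₁ h₂ => hge t (by omega) h₂) hlevel rfl
    refine ⟨r + 1, ?_⟩
    rw [pow_succ']
    exact hU.mul_apply_pos (hU.pow r) _
      (returnMat_apply_pos hQ hG.1 (Or.inl (hstep (by omega)))) hr
  · obtain ⟨τ, hτa, hτb, hτ, habove⟩ := exists_first_hit (f := fun t => (p t).1) (H := H)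
      (by omega : a + 1 ≤ b) (fun t h₁ h₂ => (hp.level_succ_bounds hK (by omega) h₂).1)
      (by omega) (by omega)
    have hexcursion : 0 < G (p (a + 1)).2 (p τ).2 :=
      hG.pos_of_descent hP hPs
        ((hp.mono (by omega) hτb).const_of_level fun t h₁ h₂ => hKP _ (habove t h₁ h₂))
        hτa (fun t h₁ h₂ => by have := habove t h₁ h₂; omega) hup (by omega)
    obtain ⟨r, hr⟩ := ih _ (by omega) (hp.mono (by omega) le_rfl) hτb
      (fun t h₁ h₂ => hge t (by omega) h₂) hτ rfl
    refine ⟨r + 1, ?_⟩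
    rw [pow_succ']
    exact hU.mul_apply_pos (hU.pow r) _ (returnMat_apply_pos hQ hG.1 (Or.inr
      ((hQ 1).mul_apply_pos hG.1 _ (hstep (by omega)) hexcursion))) hr

theorem exists_returnMat_pow_mul_pos [DecidableEq ι] (hP : ∀ d, EntrywiseNonneg (P d))
    (hPs : SkipFree fun _ => P) (hG : IsNonnegSolution P G) (hp : IsPath (fun _ => P) p a b)
    (hab : a ≤ b) (ha : (p a).1 = H) (hb : (p b).1 < H) :
    ∃ r j, 0 < (returnMat P G ^ r * P (-1)) (p a).2 j := by
  obtain ⟨τ, haτ, hτb, hτ, habove⟩ := exists_first_hit (f := fun t => (p t).1) (H := H - 1)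
    hab (fun t h₁ h₂ => (hp.level_succ_bounds hPs h₁ h₂).1) (by omega) (by omega)
  obtain ⟨s, rfl⟩ : ∃ s, τ = s + 1 := ⟨τ - 1, by omega⟩
  have hs : (p s).1 = H := by
    have := hp.level_succ_bounds hPs (by omega) (by omega : s < b)
    have := habove s (by omega) (by omega)
    omega
  obtain ⟨r, hr⟩ := hG.exists_returnMat_pow_pos hP hP hPs rfl (fun _ _ => rfl)
    (hp.mono le_rfl (by omega)) (by omega)
    (fun t h₁ h₂ => by have := habove t h₁ (by omega); omega) ha hs
  exact ⟨r, (p (s + 1)).2, ((returnMat_nonneg hP hG.1).pow r).mul_apply_pos (hP (-1)) _ hr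
    (hp.pos_of_jump (by omega) (by omega) (by omega))⟩

theorem pos_of_climb [DecidableEq ι] (hP : ∀ d, EntrywiseNonneg (P d)) (hPs : SkipFree fun _ => P)
    (hG : IsNonnegSolution P G) {N : Matrix ι ι ℝ}
    (hN : ∀ r k l, (returnMat P G ^ r) k l ≤ N k l) (k : ℕ) (hp : IsPath (fun _ => P) p a b)
    (hab : a ≤ b) (hge : ∀ t, a ≤ t → t ≤ b → H ≤ (p t).1) (ha : (p a).1 = H)
    (hb : (p b).1 = H + k) : 0 < (N * (P 1 * N) ^ k) (p a).2 (p b).2 := by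
  have hN0 := EntrywiseNonneg.of_pow_apply_le hN
  have hreturn : ∀ {a' b' H'}, IsPath (fun _ => P) p a' b' → a' ≤ b' →
      (∀ t, a' ≤ t → t ≤ b' → H' ≤ (p t).1) → (p a').1 = H' → (p b').1 = H' →
      0 < N (p a').2 (p b').2 := fun hp' hab' hge' ha' hb' => by
    obtain ⟨r, hr⟩ := hG.exists_returnMat_pow_pos hP hP hPs rfl (fun _ _ => rfl)
      hp' hab' hge' ha' hb'
    exact hr.trans_le (hN r _ _)
  induction k generalizing a H with
  | zero => simpa using hreturn hp hab hge ha (by simpa using hb)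
  | succ k ih =>
    obtain ⟨τ, haτ, hτb, hτ, hafter⟩ := exists_last_visit (f := fun t => (p t).1) hab ha
      (by push_cast at hb; omega)
    have hjump := hp.level_succ_bounds hPs haτ hτb
    have hτ₁ : (p (τ + 1)).1 = H + 1 := by
      have := hafter (τ + 1) (by omega) (by omega)
      have := hge (τ + 1) (by omega) (by omega)
      omega
    have hrest := ih (hp.mono (by omega) le_rfl) (by omega)
      (fun t h₁ h₂ => by
        have := hafter t (by omega) h₂
        have := hge t (by omega) h₂
        omega)
      hτ₁ (by push_cast at hb ⊢; omega)
    rw [pow_succ', mul_assoc (P 1)]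
    exact hN0.mul_apply_pos ((hP 1).mul (hN0.mul (((hP 1).mul hN0).pow k))) _
      (hreturn (hp.mono le_rfl hτb.le) haτ (fun t h₁ h₂ => hge t h₁ (by omega)) ha hτ)
      ((hP 1).mul_apply_pos (hN0.mul (((hP 1).mul hN0).pow k)) _
        (hp.pos_of_jump haτ hτb (by omega)) hrest)

end IsNonnegSolution

end Descent

section MarkovChain

variable {S : Type*} {P : S → S → ℝ}

theorem stepN_nonneg (hP : ∀ x y, 0 ≤ P x y) (n : ℕ) (x y : S) : 0 ≤ stepN P n x y := by
  induction n generalizing y with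
  | zero => rw [stepN]; split_ifs <;> norm_num
  | succ n ih => exact tsum_nonneg fun u => mul_nonneg (ih u) (hP u y)

theorem exists_path_of_stepN_pos (hP : ∀ x y, 0 ≤ P x y) {n : ℕ} {x y : S}
    (h : 0 < stepN P n x y) :
    ∃ q : ℕ → S, q 0 = x ∧ q n = y ∧ ∀ t < n, 0 < P (q t) (q (t + 1)) := by
  induction n generalizing y with
  | zero =>
    rw [stepN] at h
    split_ifs at h with hxy
    · exact ⟨fun _ => x, rfl, hxy, fun t ht => absurd ht t.not_lt_zero⟩
    · exact absurd h (lt_irrefl 0)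
  | succ n ih =>
    obtain ⟨u, hu⟩ : ∃ u, 0 < stepN P n x u * P u y := by
      by_contra! hneg
      exact (tsum_nonpos hneg).not_gt h
    have hxu := (pos_and_pos_or_neg_and_neg_of_mul_pos hu).resolve_right
      fun h' => (stepN_nonneg hP n x u).not_gt h'.1
    obtain ⟨q, hq0, hqn, hq⟩ := ih hxu.1
    refine ⟨fun t => if t ≤ n then q t else y, by simpa using hq0, by simp, fun t ht => ?_⟩
    rcases (by omega : t < n ∨ t = n) with ht | rfl
    · simpa [ht.le, Nat.succ_le_of_lt ht] using hq t ht
    · simpa [hqn] using hxu.2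

theorem stepN_comp_equiv {T : Type*} (e : S ≃ T) (P : T → T → ℝ) (n : ℕ) (x y : S) :
    stepN (fun a b => P (e a) (e b)) n x y = stepN P n (e x) (e y) := by
  induction n generalizing y with
  | zero => simp only [stepN]; split_ifs <;> simp_all
  | succ n ih =>
    simp only [stepN, ih]
    exact e.tsum_eq fun u => stepN P n (e x) u * P u (e y)

theorem ChainIrreducible.comp_equiv {T : Type*} (e : S ≃ T) {P : T → T → ℝ}
    (h : ChainIrreducible P) : ChainIrreducible fun a b => P (e a) (e b) := fun x y => by
  obtain ⟨n, hn, hpos⟩ := h (e x) (e y)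
  exact ⟨n, hn, by rwa [stepN_comp_equiv]⟩

def swapFirstTwo (α β γ : Type*) : α × β × γ ≃ β × α × γ :=
  ⟨fun x => (x.2.1, x.1, x.2.2), fun x => (x.2.1, x.1, x.2.2), fun _ => rfl, fun _ => rfl⟩

end MarkovChain

section HalfPlane

variable {s0 : ℕ} {A A1 : ℤ → ℤ → Matrix (Fin s0) (Fin s0) ℝ} {z : ℝ}
  {G N : Matrix (Fin s0) (Fin s0) ℝ}

theorem mem_of_apply_pos {S T : Finset ℤ} (hsupp : ∀ i j, ¬(i ∈ S ∧ j ∈ T) → A i j = 0)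
    {i j : ℤ} {k l : Fin s0} (h : 0 < A i j k l) : i ∈ S ∧ j ∈ T := by
  by_contra hc
  rw [hsupp i j hc] at h
  exact lt_irrefl 0 h

theorem AstarR_nonneg (hA : ∀ i j : ℤ, ∀ k l, 0 ≤ A i j k l) (hz : 0 < z) (i : ℤ) :
    EntrywiseNonneg (AstarR s0 A z i) := fun k l => by
  simp only [AstarR, Matrix.sum_apply, Matrix.smul_apply, smul_eq_mul]
  exact sum_nonneg fun j _ => mul_nonneg (zpow_pos hz j).le (hA j i k l)

theorem AstarR_apply_pos (hA : ∀ i j : ℤ, ∀ k l, 0 ≤ A i j k l) (hz : 0 < z) {i j : ℤ}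
    {k l : Fin s0} (hj : j ∈ Hs) (h : 0 < A j i k l) : 0 < AstarR s0 A z i k l := by
  simp only [AstarR, Matrix.sum_apply, Matrix.smul_apply, smul_eq_mul]
  exact sum_pos' (fun j _ => mul_nonneg (zpow_pos hz j).le (hA j i k l))
    ⟨j, hj, mul_pos (zpow_pos hz j) h⟩

theorem AstarR_eq_zero {T : Finset ℤ} (hsupp : ∀ i j, ¬(i ∈ Hs ∧ j ∈ T) → A i j = 0) {d : ℤ}
    (hd : d ∉ T) : AstarR s0 A z d = 0 :=
  sum_eq_zero fun j _ => by rw [hsupp j d fun h => hd h.2, smul_zero]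

theorem exists_isPath_of_fullKernel (hAsupp : ∀ i j, ¬(i ∈ Hs ∧ j ∈ Hs) → A i j = 0)
    (hA : ∀ i j : ℤ, ∀ k l, 0 ≤ A i j k l) (hz : 0 < z)
    (hirr : ChainIrreducible (fullKernel s0 A)) (x y : ℤ × Fin s0) :
    ∃ n, ∃ p : ℕ → ℤ × Fin s0, p 0 = x ∧ p n = y ∧ IsPath (fun _ => AstarR s0 A z) p 0 n := by
  obtain ⟨n, -, hpos⟩ := hirr (0, x) (0, y)
  obtain ⟨q, hq0, hqn, hq⟩ := exists_path_of_stepN_pos (fun _ _ => hA _ _ _ _) hpos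
  refine ⟨n, fun t => (q t).2, by simp [hq0], by simp [hqn], fun t _ ht => ?_⟩
  have hstep := hq t ht
  exact AstarR_apply_pos hA hz (mem_of_apply_pos hAsupp hstep).1 hstep

theorem exists_isPath_of_half1Kernel (hAsupp : ∀ i j, ¬(i ∈ Hs ∧ j ∈ Hs) → A i j = 0)
    (hA1supp : ∀ i j, ¬(i ∈ Hs ∧ j ∈ Hps) → A1 i j = 0)
    (hA : ∀ i j : ℤ, ∀ k l, 0 ≤ A i j k l) (hA1 : ∀ i j : ℤ, ∀ k l, 0 ≤ A1 i j k l)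
    (hz : 0 < z) (hirr : ChainIrreducible (half1Kernel s0 A A1)) (x y : ℕ × Fin s0) :
    ∃ n, ∃ p : ℕ → ℤ × Fin s0, p 0 = ((x.1 : ℤ), x.2) ∧ p n = ((y.1 : ℤ), y.2) ∧
      (∀ t, 0 ≤ (p t).1) ∧
      IsPath (boundaryFamily (AstarR s0 A1 z) (AstarR s0 A z)) p 0 n := by
  have hker : ∀ a b, 0 ≤ half1Kernel s0 A A1 a b := fun a b => by
    rw [half1Kernel]; split_ifs
    exacts [hA1 _ _ _ _, hA _ _ _ _]
  obtain ⟨n, -, hpos⟩ := hirr (0, x) (0, y)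
  obtain ⟨q, hq0, hqn, hq⟩ := exists_path_of_stepN_pos hker hpos
  refine ⟨n, fun t => ((q t).2.1, (q t).2.2), by simp [hq0], by simp [hqn],
    fun t => Nat.cast_nonneg _, fun t _ ht => ?_⟩
  have hstep := hq t ht
  simp only [half1Kernel, boundaryFamily, Nat.cast_eq_zero] at hstep ⊢
  split_ifs at hstep ⊢
  · exact AstarR_apply_pos hA1 hz (mem_of_apply_pos hA1supp hstep).1 hstep
  · exact AstarR_apply_pos hA hz (mem_of_apply_pos hAsupp hstep).1 hstep

end HalfPlane

section HalfPlane

variable {s0 : ℕ} {A A1 : ℤ → ℤ → Matrix (Fin s0) (Fin s0) ℝ} {z : ℝ}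
  {G N : Matrix (Fin s0) (Fin s0) ℝ}

theorem skipFree_AstarR (hAsupp : ∀ i j, ¬(i ∈ Hs ∧ j ∈ Hs) → A i j = 0) :
    SkipFree fun _ => AstarR s0 A z :=
  fun _ _ hd => AstarR_eq_zero hAsupp hd

theorem skipFree_boundaryFamily (hAsupp : ∀ i j, ¬(i ∈ Hs ∧ j ∈ Hs) → A i j = 0)
    (hA1supp : ∀ i j, ¬(i ∈ Hs ∧ j ∈ Hps) → A1 i j = 0) :
    SkipFree (boundaryFamily (AstarR s0 A1 z) (AstarR s0 A z)) := fun h d hd => by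
  unfold boundaryFamily
  split_ifs
  · have hsub : Hps ⊆ Hs := by decide
    exact AstarR_eq_zero hA1supp fun hd' => hd (hsub hd')
  · exact AstarR_eq_zero hAsupp hd

theorem exists_returnMat_pow_mul_pos_of_fullKernel
    (hAsupp : ∀ i j, ¬(i ∈ Hs ∧ j ∈ Hs) → A i j = 0) (hA : ∀ i j : ℤ, ∀ k l, 0 ≤ A i j k l)
    (hz : 0 < z) (hirr : ChainIrreducible (fullKernel s0 A))
    (hG : IsNonnegSolution (AstarR s0 A z) G) (l : Fin s0) :
    ∃ r j, 0 < (returnMat (AstarR s0 A z) G ^ r * AstarR s0 A z (-1)) l j := by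
  obtain ⟨n, p, hp0, hpn, hp⟩ := exists_isPath_of_fullKernel hAsupp hA hz hirr (1, l) (0, l)
  simpa [hp0] using hG.exists_returnMat_pow_mul_pos (AstarR_nonneg hA hz)
    (skipFree_AstarR hAsupp) hp n.zero_le (by simp [hp0]) (by simp [hpn] : (p n).1 < 1)

theorem exists_returnMat_pow_pos_of_half1Kernel
    (hAsupp : ∀ i j, ¬(i ∈ Hs ∧ j ∈ Hs) → A i j = 0)
    (hA1supp : ∀ i j, ¬(i ∈ Hs ∧ j ∈ Hps) → A1 i j = 0)
    (hA : ∀ i j : ℤ, ∀ k l, 0 ≤ A i j k l) (hA1 : ∀ i j : ℤ, ∀ k l, 0 ≤ A1 i j k l)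
    (hz : 0 < z) (hirr : ChainIrreducible (half1Kernel s0 A A1))
    (hG : IsNonnegSolution (AstarR s0 A z) G) (k i : Fin s0) :
    ∃ r, 0 < (returnMat (AstarR s0 A1 z) G ^ r) k i := by
  obtain ⟨n, p, hp0, hpn, hge, hp⟩ :=
    exists_isPath_of_half1Kernel hAsupp hA1supp hA hA1 hz hirr (0, k) (0, i)
  simpa [hp0, hpn] using hG.exists_returnMat_pow_pos (AstarR_nonneg hA hz)
    (AstarR_nonneg hA1 hz) (skipFree_boundaryFamily hAsupp hA1supp) (if_pos rfl)
    (fun _ hh => if_neg hh.ne') hp n.zero_le (fun t _ _ => hge t) (by simp [hp0])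
    (by simp [hpn])

theorem exists_pos_of_half1Kernel_climb
    (hAsupp : ∀ i j, ¬(i ∈ Hs ∧ j ∈ Hs) → A i j = 0)
    (hA1supp : ∀ i j, ¬(i ∈ Hs ∧ j ∈ Hps) → A1 i j = 0)
    (hA : ∀ i j : ℤ, ∀ k l, 0 ≤ A i j k l) (hA1 : ∀ i j : ℤ, ∀ k l, 0 ≤ A1 i j k l)
    (hz : 0 < z) (hirr : ChainIrreducible (half1Kernel s0 A A1))
    (hG : IsNonnegSolution (AstarR s0 A z) G)
    (hN : ∀ r k l, (returnMat (AstarR s0 A z) G ^ r) k l ≤ N k l) (k : ℕ) (i : Fin s0) :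
    ∃ j, 0 < (AstarR s0 A1 z 1 * (N * (AstarR s0 A z 1 * N) ^ k)) j i := by
  have hN0 := EntrywiseNonneg.of_pow_apply_le hN
  have hP := AstarR_nonneg hA hz
  obtain ⟨n, p, hp0, hpn, hge, hp⟩ :=
    exists_isPath_of_half1Kernel hAsupp hA1supp hA hA1 hz hirr (0, i) (k + 1, i)
  obtain ⟨τ, -, hτn, hτ, hafter⟩ := exists_last_visit (f := fun t => (p t).1) (H := 0) n.zero_le
    (by simp [hp0]) (by simp [hpn]; omega)
  have hτ₁ : (p (τ + 1)).1 = 1 := by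
    have := (hp.level_succ_bounds (skipFree_boundaryFamily hAsupp hA1supp) τ.zero_le hτn).2
    have := hafter (τ + 1) (by omega) (by omega)
    have := hge (τ + 1)
    omega
  have hstep : 0 < AstarR s0 A1 z 1 (p τ).2 (p (τ + 1)).2 := by
    simpa [boundaryFamily, hτ] using hp.pos_of_jump τ.zero_le hτn (by omega : _ = (1 : ℤ))
  have hclimb := hG.pos_of_climb hP (skipFree_AstarR hAsupp) hN k
    ((hp.mono (by omega) le_rfl).const_of_level fun t h₁ h₂ =>
      if_neg (hafter t (by omega) h₂.le))
    (by omega) (fun t h₁ h₂ => by have := hafter t (by omega) h₂; have := hge t; omega)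
    hτ₁ (by simp [hpn]; ring)
  refine ⟨(p τ).2, ?_⟩
  simpa [hpn] using (AstarR_nonneg hA1 hz 1).mul_apply_pos
    (hN0.mul (((hP 1).mul hN0).pow k)) _ hstep hclimb

theorem isUnit_and_pos_of_vecMul_C1matR_eq_self
    (hAsupp : ∀ i j, ¬(i ∈ Hs ∧ j ∈ Hs) → A i j = 0)
    (hA1supp : ∀ i j, ¬(i ∈ Hs ∧ j ∈ Hps) → A1 i j = 0)
    (hA : ∀ i j : ℤ, ∀ k l, 0 ≤ A i j k l) (hA1 : ∀ i j : ℤ, ∀ k l, 0 ≤ A1 i j k l)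
    (hfull : ChainIrreducible (fullKernel s0 A)) (hhalf : ChainIrreducible (half1Kernel s0 A A1))
    (hz : 0 < z) (hG : IsNonnegSolution (AstarR s0 A z) G) {u : Fin s0 → ℝ} (hu0 : u ≠ 0)
    (hu : ∀ i, 0 ≤ u i) (hfix : vecMul u (C1matR s0 A1 z G) = u) :
    IsUnit (1 - AstarR s0 A z 0 - AstarR s0 A z 1 * G) ∧ (∀ i, 0 < u i) ∧
      ∀ k : ℕ, ∀ i, 0 < vecMul u (A1starR s0 A1 z 1 * (1 - AstarR s0 A z 0 -
        AstarR s0 A z 1 * G)⁻¹ * (AstarR s0 A z 1 * (1 - AstarR s0 A z 0 -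
          AstarR s0 A z 1 * G)⁻¹) ^ k) i := by
  have hP := AstarR_nonneg hA hz
  have hU := returnMat_nonneg hP hG.1
  have hsum : Summable (returnMat (AstarR s0 A z) G ^ ·) :=
    summable_pow_of_sum_pow_mul_le hU (hP (-1)) (hG.sum_pow_mul_apply_le hP)
      (exists_returnMat_pow_mul_pos_of_fullKernel hAsupp hA hz hfull hG)
  have hI : 1 - AstarR s0 A z 0 - AstarR s0 A z 1 * G = 1 - returnMat (AstarR s0 A z) G := by
    rw [sub_sub, returnMat]
  have hupos : ∀ i, 0 < u i := (returnMat_nonneg (AstarR_nonneg hA1 hz) hG.1).pos_of_vecMul_eq_self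
    (exists_returnMat_pow_pos_of_half1Kernel hAsupp hA1supp hA hA1 hz hhalf hG) hu0 hu hfix
  refine ⟨hI ▸ hsum.isUnit_one_sub, hupos, fun k i => ?_⟩
  have hN := pow_apply_le_tsum_pow hU hsum
  have hN0 := EntrywiseNonneg.of_pow_apply_le hN
  obtain ⟨j, hj⟩ := exists_pos_of_half1Kernel_climb hAsupp hA1supp hA hA1 hz hhalf hG hN k i
  rw [hI, inv_one_sub_eq_tsum_pow hsum, mul_assoc]
  exact ((AstarR_nonneg hA1 hz 1).mul (hN0.mul (((hP 1).mul hN0).pow k))).vecMul_pos hu j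
    (hupos j) hj

end HalfPlane

end QBD

open QBD in
theorem statement19_general
    (s0 : ℕ)
    (A A1 A2 : ℤ → ℤ → Matrix (Fin s0) (Fin s0) ℝ)
    (hAsupp : ∀ i j : ℤ, ¬(i ∈ Hs ∧ j ∈ Hs) → A i j = 0)
    (hA1supp : ∀ i j : ℤ, ¬(i ∈ Hs ∧ j ∈ Hps) → A1 i j = 0)
    (hA2supp : ∀ i j : ℤ, ¬(i ∈ Hps ∧ j ∈ Hs) → A2 i j = 0)
    (hAnn : ∀ i j : ℤ, ∀ k l, 0 ≤ A i j k l)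
    (hA1nn : ∀ i j : ℤ, ∀ k l, 0 ≤ A1 i j k l)
    (hA2nn : ∀ i j : ℤ, ∀ k l, 0 ≤ A2 i j k l)
    -- Assumption (A2)
    (hfull_i : ChainIrreducible (fullKernel s0 A))
    (hh1_i : ChainIrreducible (half1Kernel s0 A A1))
    (hh2_i : ChainIrreducible (half2Kernel s0 A A2)) :
    (∀ z0 ∈ Set.Icc (zLow1 s0 A) (zUp1 s0 A),
      ∀ G1z : Matrix (Fin s0) (Fin s0) ℝ, IsMinSolG1 s0 A z0 G1z →
      sprR (C1matR s0 A1 z0 G1z) = 1 →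
      ∀ u : Fin s0 → ℝ, u ≠ 0 → (∀ i, 0 ≤ u i) →
      Matrix.vecMul u (C1matR s0 A1 z0 G1z) = u →
      IsUnit (1 - AstarR s0 A z0 0 - AstarR s0 A z0 1 * G1z) ∧
      (∀ i, 0 < u i) ∧
      (∀ k : ℕ, ∀ i, 0 <
        Matrix.vecMul u
          (A1starR s0 A1 z0 1 * (1 - AstarR s0 A z0 0 - AstarR s0 A z0 1 * G1z)⁻¹ *
            (AstarR s0 A z0 1 * (1 - AstarR s0 A z0 0 - AstarR s0 A z0 1 * G1z)⁻¹) ^ k) i)) ∧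
    (∀ w0 ∈ Set.Icc (zLow2 s0 A) (zUp2 s0 A),
      ∀ G2w : Matrix (Fin s0) (Fin s0) ℝ, IsMinSolG2 s0 A w0 G2w →
      sprR (C2matR s0 A2 G2w w0) = 1 →
      ∀ u : Fin s0 → ℝ, u ≠ 0 → (∀ i, 0 ≤ u i) →
      Matrix.vecMul u (C2matR s0 A2 G2w w0) = u →
      IsUnit (1 - ArowR s0 A w0 0 - ArowR s0 A w0 1 * G2w) ∧
      (∀ i, 0 < u i) ∧
      (∀ k : ℕ, ∀ i, 0 <
        Matrix.vecMul u
          (A2rowR s0 A2 w0 1 * (1 - ArowR s0 A w0 0 - ArowR s0 A w0 1 * G2w)⁻¹ *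
            (ArowR s0 A w0 1 * (1 - ArowR s0 A w0 0 - ArowR s0 A w0 1 * G2w)⁻¹) ^ k) i)) := by
  refine ⟨fun z0 hz0 G hG _ u hu0 hu hfix =>
    isUnit_and_pos_of_vecMul_C1matR_eq_self hAsupp hA1supp hAnn hA1nn hfull_i hh1_i
      ((Real.exp_pos _).trans_le hz0.1) ⟨hG.1, hG.2.1⟩ hu0 hu hfix,
    fun w0 hw0 G hG _ u hu0 hu hfix => ?_⟩
  -- Swapping the two coordinates turns the second half-plane into the first.
  have hfull' : ChainIrreducible (fullKernel s0 fun i j => A j i) :=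
    hfull_i.comp_equiv (swapFirstTwo _ _ _)
  have hhalf' : ChainIrreducible (half1Kernel s0 (fun i j => A j i) fun i j => A2 j i) :=
    hh2_i.comp_equiv (swapFirstTwo _ _ _)
  exact isUnit_and_pos_of_vecMul_C1matR_eq_self (fun i j h => hAsupp j i fun hc => h hc.symm)
    (fun i j h => hA2supp j i fun hc => h hc.symm) (fun i j => hAnn j i) (fun i j => hA2nn j i)
    hfull' hhalf' ((Real.exp_pos _).trans_le hw0.1) ⟨hG.1, hG.2.1⟩ hu0 hu hfix

open QBD in
/-- positivity of the invariant row vector `u` of `C1(z0, G1(z0))` (resp.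
`C2(G2(w0), w0)`) and of `u A¹_{*,1}(z0) N1(z0) R1(z0)^k` (resp.
`u A²_{1,*}(w0) N2(w0) R2(w0)^k`), together with existence of the inverse defining
`N1(z0)` (resp. `N2(w0)`). -/
theorem statement19
    (s0 : ℕ) (hs0 : 1 ≤ s0)
    (A A1 A2 : ℤ → ℤ → Matrix (Fin s0) (Fin s0) ℝ)
    (hAsupp : ∀ i j : ℤ, ¬(i ∈ Hs ∧ j ∈ Hs) → A i j = 0)
    (hA1supp : ∀ i j : ℤ, ¬(i ∈ Hs ∧ j ∈ Hps) → A1 i j = 0)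
    (hA2supp : ∀ i j : ℤ, ¬(i ∈ Hps ∧ j ∈ Hs) → A2 i j = 0)
    (hAnn : ∀ i j : ℤ, ∀ k l, 0 ≤ A i j k l)
    (hA1nn : ∀ i j : ℤ, ∀ k l, 0 ≤ A1 i j k l)
    (hA2nn : ∀ i j : ℤ, ∀ k l, 0 ≤ A2 i j k l)
    (hAst : IsStochastic (∑ i ∈ Hs, ∑ j ∈ Hs, A i j))
    (hA1st : IsStochastic (∑ i ∈ Hs, ∑ j ∈ Hps, A1 i j))
    (hA2st : IsStochastic (∑ i ∈ Hps, ∑ j ∈ Hs, A2 i j))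
    -- Assumption (A2)
    (hfull_i : ChainIrreducible (fullKernel s0 A))
    (hfull_a : ChainAperiodic (fullKernel s0 A))
    (hh1_i : ChainIrreducible (half1Kernel s0 A A1))
    (hh1_a : ChainAperiodic (half1Kernel s0 A A1))
    (hh2_i : ChainIrreducible (half2Kernel s0 A A2))
    (hh2_a : ChainAperiodic (half2Kernel s0 A A2)) :
    (∀ z0 ∈ Set.Icc (zLow1 s0 A) (zUp1 s0 A),
      ∀ G1z : Matrix (Fin s0) (Fin s0) ℝ, IsMinSolG1 s0 A z0 G1z →
      sprR (C1matR s0 A1 z0 G1z) = 1 →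
      ∀ u : Fin s0 → ℝ, u ≠ 0 → (∀ i, 0 ≤ u i) →
      Matrix.vecMul u (C1matR s0 A1 z0 G1z) = u →
      IsUnit (1 - AstarR s0 A z0 0 - AstarR s0 A z0 1 * G1z) ∧
      (∀ i, 0 < u i) ∧
      (∀ k : ℕ, ∀ i, 0 <
        Matrix.vecMul u
          (A1starR s0 A1 z0 1 * (1 - AstarR s0 A z0 0 - AstarR s0 A z0 1 * G1z)⁻¹ *
            (AstarR s0 A z0 1 * (1 - AstarR s0 A z0 0 - AstarR s0 A z0 1 * G1z)⁻¹) ^ k) i)) ∧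
    (∀ w0 ∈ Set.Icc (zLow2 s0 A) (zUp2 s0 A),
      ∀ G2w : Matrix (Fin s0) (Fin s0) ℝ, IsMinSolG2 s0 A w0 G2w →
      sprR (C2matR s0 A2 G2w w0) = 1 →
      ∀ u : Fin s0 → ℝ, u ≠ 0 → (∀ i, 0 ≤ u i) →
      Matrix.vecMul u (C2matR s0 A2 G2w w0) = u →
      IsUnit (1 - ArowR s0 A w0 0 - ArowR s0 A w0 1 * G2w) ∧
      (∀ i, 0 < u i) ∧
      (∀ k : ℕ, ∀ i, 0 <
        Matrix.vecMul u
          (A2rowR s0 A2 w0 1 * (1 - ArowR s0 A w0 0 - ArowR s0 A w0 1 * G2w)⁻¹ *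
            (ArowR s0 A w0 1 * (1 - ArowR s0 A w0 0 - ArowR s0 A w0 1 * G2w)⁻¹) ^ k) i)) :=
  statement19_general s0 A A1 A2 hAsupp hA1supp hA2supp hAnn hA1nn hA2nn hfull_i hh1_i hh2_i
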